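/- Let (P_n) be strongly invariant for the system (A) and let h, k be growth rates. The pair (A,P) is (h,k)-dichotomic if and only if there exists a sequence of norms 𝒩 = {|||·|||_n : n ∈ ℕ} compatible with (P_n) such that h_m|||A_m^n P_n x|||_m ≤ h_n|||x|||_n and k_m|||B_m^n Q_m x|||_n ≤ k_n|||x|||_m for all m ≥ n and all x ∈ X. -/

import Mathlib

open ContinuousLinearMap Filter

noncomputable section

variable {X : Type*} [NormedAddCommGroup X] [NormedSpace ℝ X]

/-- The evolution operator `A_m^n` associated to the linear difference system
`x_{n+1} = A_n x_n`: `A_m^n = A_{m-1} ⋯ A_n` for `m > n` and `A_n^n = I`. -/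
def evol (A : ℕ → X →L[ℝ] X) : ℕ → ℕ → X →L[ℝ] X
  | 0, _ => 1
  | m + 1, n => if m + 1 ≤ n then 1 else A m ∘L evol A m n

/-- `P` is a projectors sequence. -/
def ProjSeq (P : ℕ → X →L[ℝ] X) : Prop := ∀ n, P n ∘L P n = P n

/-- The projectors sequence `P` is invariant for the system `(A)`. -/
def InvariantFor (A P : ℕ → X →L[ℝ] X) : Prop := ∀ n, A n ∘L P n = P (n + 1) ∘L A n

/-- The projectors sequence `P` is strongly invariant for the system `(A)`: it is invariant and
the restriction of `A_m^n` to `Ker P_n` is an isomorphism from `Ker P_n` onto `Ker P_m`. -/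
def StronglyInvariantFor (A P : ℕ → X →L[ℝ] X) : Prop :=
  InvariantFor A P ∧ ∀ m n : ℕ, n ≤ m →
    Set.BijOn (evol A m n) (LinearMap.ker (P n : X →ₗ[ℝ] X) : Set X) (LinearMap.ker (P m : X →ₗ[ℝ] X) : Set X)

/-- A growth rate: an increasing sequence with values in `[1, ∞)` tending to `∞`. -/
def IsGrowthRate (h : ℕ → ℝ) : Prop :=
  StrictMono h ∧ (∀ n, 1 ≤ h n) ∧ Tendsto h atTop atTop

/-- The pair `(A, P)` is `(h,k)`-dichotomic. -/
def Dichotomic (A P : ℕ → X →L[ℝ] X) (h k : ℕ → ℝ) : Prop :=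
  ∃ d : ℕ → ℝ, (∀ n, 1 ≤ d n) ∧ Monotone d ∧
    ∀ m n : ℕ, n ≤ m → ∀ x : X,
      h m * ‖evol A m n (P n x)‖ ≤ d n * (h n * ‖P n x‖) ∧
      k m * ‖(1 - P n) x‖ ≤ d m * (k n * ‖evol A m n ((1 - P n) x)‖)

/-- The pair `(A, P)` is uniformly `(h,k)`-dichotomic. -/
def UniformDichotomic (A P : ℕ → X →L[ℝ] X) (h k : ℕ → ℝ) : Prop :=
  ∃ d : ℝ, 1 ≤ d ∧
    ∀ m n : ℕ, n ≤ m → ∀ x : X,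
      h m * ‖evol A m n (P n x)‖ ≤ d * (h n * ‖P n x‖) ∧
      k m * ‖(1 - P n) x‖ ≤ d * (k n * ‖evol A m n ((1 - P n) x)‖)

/-- The pair `(A, P)` has `(h,k)`-growth. -/
def HasGrowth (A P : ℕ → X →L[ℝ] X) (h k : ℕ → ℝ) : Prop :=
  ∃ g : ℕ → ℝ, (∀ n, 1 ≤ g n) ∧ Monotone g ∧
    ∀ m n : ℕ, n ≤ m → ∀ x : X,
      h n * ‖evol A m n (P n x)‖ ≤ g n * (h m * ‖P n x‖) ∧
      k n * ‖(1 - P n) x‖ ≤ g m * (k m * ‖evol A m n ((1 - P n) x)‖)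

/-- `N` is a sequence of norms on `X`. -/
def IsNormSeq (N : ℕ → X → ℝ) : Prop :=
  ∀ n, (∀ x y, N n (x + y) ≤ N n x + N n y) ∧
    (∀ (a : ℝ) (x : X), N n (a • x) = |a| * N n x) ∧
    (∀ x, N n x = 0 ↔ x = 0)

/-- The sequence of norms `N` is compatible with the projectors sequence `P`. -/
def NormsCompatible (N : ℕ → X → ℝ) (P : ℕ → X →L[ℝ] X) : Prop :=
  IsNormSeq N ∧ ∃ c : ℕ → ℝ, (∀ n, 1 ≤ c n) ∧ Monotone c ∧
    ∀ (n : ℕ) (x : X), ‖x‖ ≤ N n x ∧ N n x ≤ c n * (‖P n x‖ + ‖(1 - P n) x‖)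

/-- The defining properties of the skew-evolution operator `B` associated to the pair `(A, P)`:
`A_m^n B_m^n Q_m = Q_m`, `B_m^n A_m^n Q_n = Q_n` and `B_m^n Q_m = Q_n B_m^n Q_m` for `m ≥ n`,
where `Q_n = I - P_n`. -/
def SkewEvol (A P : ℕ → X →L[ℝ] X) (B : ℕ → ℕ → X →L[ℝ] X) : Prop :=
  ∀ m n : ℕ, n ≤ m →
    evol A m n ∘L (B m n ∘L (1 - P m)) = 1 - P m ∧
    B m n ∘L (evol A m n ∘L (1 - P n)) = 1 - P n ∧
    B m n ∘L (1 - P m) = (1 - P n) ∘L (B m n ∘L (1 - P m))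

/-! Given a dichotomy with constants `d n`, the norm
`|||x|||_n = sup_{m ≥ n} (h m / h n) ‖A_m^n P_n x‖ + sup_{j ≤ n} (k n / k j) ‖B_n^j Q_n x‖`
is compatible with `P` (the dichotomy bounds each supremum by `d n` times `‖P_n x‖`, resp.
`‖Q_n x‖`), and the cocycle identities `A_l^m A_m^n = A_l^n`, `B_n^j B_m^n Q_m = B_m^j Q_m` turn
the dichotomy inequalities into contraction estimates for `|||·|||`. Conversely, sandwiching
`|||·|||_n` between `‖·‖` and `c n (‖P_n ·‖ + ‖Q_n ·‖)` turns the contraction estimates back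
into a dichotomy with `d = c`. -/

section WeightedSup

variable {ι E F : Type*} [SeminormedAddCommGroup E] [NormedSpace ℝ E]
  [SeminormedAddCommGroup F] [NormedSpace ℝ F] {c : ι → ℝ} {T : ι → E →L[ℝ] F}

/-- `x ↦ ⨆ i, c i * ‖T i x‖`, provided `c ≥ 0` and the supremum is finite at every point
(otherwise the supremum of seminorms takes a junk value). -/
def weightedSupSeminorm (c : ι → ℝ) (T : ι → E →L[ℝ] F) : Seminorm ℝ E :=
  ⨆ i, (normSeminorm ℝ F).comp ((c i • T i : E →L[ℝ] F) : E →ₗ[ℝ] F)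

theorem weightedSupSeminorm_apply (hc : ∀ i, 0 ≤ c i)
    (hT : ∀ x, BddAbove (Set.range fun i => c i * ‖T i x‖)) (x : E) :
    weightedSupSeminorm c T x = ⨆ i, c i * ‖T i x‖ := by
  have hterm : ∀ i y, (normSeminorm ℝ F).comp ((c i • T i : E →L[ℝ] F) : E →ₗ[ℝ] F) y =
      c i * ‖T i y‖ := fun i y => by
    simp [norm_smul, abs_of_nonneg (hc i)]
  rw [weightedSupSeminorm, Seminorm.iSup_apply]
  · simp only [hterm]
  · simpa only [Seminorm.bddAbove_range_iff, hterm] using hT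

theorem le_weightedSupSeminorm (hc : ∀ i, 0 ≤ c i)
    (hT : ∀ x, BddAbove (Set.range fun i => c i * ‖T i x‖)) (i : ι) (x : E) :
    c i * ‖T i x‖ ≤ weightedSupSeminorm c T x := by
  rw [weightedSupSeminorm_apply hc hT]
  exact le_ciSup (hT x) i

theorem weightedSupSeminorm_le [Nonempty ι] (hc : ∀ i, 0 ≤ c i)
    (hT : ∀ x, BddAbove (Set.range fun i => c i * ‖T i x‖)) {x : E} {r : ℝ}
    (hr : ∀ i, c i * ‖T i x‖ ≤ r) : weightedSupSeminorm c T x ≤ r := by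
  rw [weightedSupSeminorm_apply hc hT]
  exact ciSup_le hr

end WeightedSup

theorem isNormSeq_of_norm_le (N : ℕ → Seminorm ℝ X) (hN : ∀ n x, ‖x‖ ≤ N n x) :
    IsNormSeq fun n => ⇑(N n) := fun n =>
  ⟨map_add_le_add (N n), fun a x => by simp only [map_smul_eq_mul, Real.norm_eq_abs],
    fun x => ⟨fun hx => norm_le_zero_iff.mp ((hN n x).trans hx.le), fun hx => hx ▸ map_zero (N n)⟩⟩

theorem IsGrowthRate.pos {h : ℕ → ℝ} (hh : IsGrowthRate h) (n : ℕ) : 0 < h n :=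
  one_pos.trans_le (hh.2.1 n)

section Evolution

variable {A P : ℕ → X →L[ℝ] X} {B : ℕ → ℕ → X →L[ℝ] X}

@[simp]
theorem evol_self (A : ℕ → X →L[ℝ] X) (n : ℕ) : evol A n n = 1 := by
  cases n <;> simp [evol]

theorem evol_succ (A : ℕ → X →L[ℝ] X) {m n : ℕ} (hnm : n ≤ m) :
    evol A (m + 1) n = A m ∘L evol A m n := by
  simp [evol, show ¬m + 1 ≤ n by omega]

theorem evol_comp (A : ℕ → X →L[ℝ] X) {n l m : ℕ} (hnl : n ≤ l) (hlm : l ≤ m) :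
    evol A m l ∘L evol A l n = evol A m n := by
  induction m, hlm using Nat.le_induction with
  | base => ext; simp
  | succ m hlm ih => rw [evol_succ A hlm, evol_succ A (hnl.trans hlm), comp_assoc, ih]

theorem evol_evol_apply (A : ℕ → X →L[ℝ] X) {n l m : ℕ} (hnl : n ≤ l) (hlm : l ≤ m) (x : X) :
    evol A m l (evol A l n x) = evol A m n x := by
  rw [← evol_comp A hnl hlm, comp_apply]

theorem InvariantFor.evol_comp_proj (hinv : InvariantFor A P) {n m : ℕ} (hnm : n ≤ m) :
    evol A m n ∘L P n = P m ∘L evol A m n := by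
  induction m, hnm using Nat.le_induction with
  | base => ext; simp
  | succ m hnm ih => rw [evol_succ A hnm, comp_assoc, ih, ← comp_assoc, hinv m, comp_assoc]

theorem InvariantFor.evol_proj_apply (hinv : InvariantFor A P) {n m : ℕ} (hnm : n ≤ m) (x : X) :
    evol A m n (P n x) = P m (evol A m n x) := by
  rw [← comp_apply, hinv.evol_comp_proj hnm, comp_apply]

theorem ProjSeq.proj_proj_apply (hP : ProjSeq P) (n : ℕ) (x : X) : P n (P n x) = P n x := by
  rw [← comp_apply, hP n]

theorem ProjSeq.proj_compl_apply (hP : ProjSeq P) (n : ℕ) (x : X) : P n ((1 - P n) x) = 0 := by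
  simp [hP.proj_proj_apply]

theorem ProjSeq.compl_proj_apply (hP : ProjSeq P) (n : ℕ) (x : X) : (1 - P n) (P n x) = 0 := by
  simp [hP.proj_proj_apply]

theorem SkewEvol.evol_apply (hB : SkewEvol A P B) {m n : ℕ} (hnm : n ≤ m) (x : X) :
    evol A m n (B m n ((1 - P m) x)) = (1 - P m) x := by
  simpa only [comp_apply] using congr($((hB m n hnm).1) x)

theorem SkewEvol.apply_evol (hB : SkewEvol A P B) {m n : ℕ} (hnm : n ≤ m) (x : X) :
    B m n (evol A m n ((1 - P n) x)) = (1 - P n) x := by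
  simpa only [comp_apply] using congr($((hB m n hnm).2.1) x)

theorem SkewEvol.compl_apply (hB : SkewEvol A P B) {m n : ℕ} (hnm : n ≤ m) (x : X) :
    (1 - P n) (B m n ((1 - P m) x)) = B m n ((1 - P m) x) := by
  simpa only [comp_apply] using congr($((hB m n hnm).2.2) x).symm

theorem SkewEvol.proj_apply (hB : SkewEvol A P B) (hP : ProjSeq P) {m n : ℕ} (hnm : n ≤ m)
    (x : X) : P n (B m n ((1 - P m) x)) = 0 := by
  rw [← hB.compl_apply hnm, hP.proj_compl_apply]

theorem SkewEvol.self_apply (hB : SkewEvol A P B) (n : ℕ) (x : X) :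
    B n n ((1 - P n) x) = (1 - P n) x := by
  simpa using hB.apply_evol le_rfl x

/-- The cocycle identity `B_n^j B_m^n Q_m = B_m^j Q_m`: both sides lie in `Ker P_j` and are
mapped to `Q_m x` by `A_m^j`, which is injective there. -/
theorem SkewEvol.cocycle_apply (hB : SkewEvol A P B) (hP : ProjSeq P)
    (hSI : StronglyInvariantFor A P) {j n m : ℕ} (hjn : j ≤ n) (hnm : n ≤ m) (x : X) :
    B n j (B m n ((1 - P m) x)) = B m j ((1 - P m) x) := by
  set w := B m n ((1 - P m) x)
  have hw : (1 - P n) w = w := hB.compl_apply hnm x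
  refine (hSI.2 m j (hjn.trans hnm)).injOn ?_ ?_ ?_
  · rw [SetLike.mem_coe, LinearMap.mem_ker, coe_coe, ← hw]
    exact hB.proj_apply hP hjn w
  · exact hB.proj_apply hP (hjn.trans hnm) x
  · calc evol A m j (B n j w)
        = evol A m n (evol A n j (B n j ((1 - P n) w))) := by rw [evol_evol_apply A hjn hnm, hw]
      _ = (1 - P m) x := by rw [hB.evol_apply hjn, hw, hB.evol_apply hnm]
      _ = evol A m j (B m j ((1 - P m) x)) := (hB.evol_apply (hjn.trans hnm) x).symm

end Evolution

section DichotomyNorm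

variable {A P : ℕ → X →L[ℝ] X} {B : ℕ → ℕ → X →L[ℝ] X} {h k d : ℕ → ℝ}

def StableBound (A P : ℕ → X →L[ℝ] X) (h d : ℕ → ℝ) : Prop :=
  ∀ m n, n ≤ m → ∀ x, h m * ‖evol A m n (P n x)‖ ≤ d n * (h n * ‖P n x‖)

def UnstableBound (A P : ℕ → X →L[ℝ] X) (k d : ℕ → ℝ) : Prop :=
  ∀ m n, n ≤ m → ∀ x, k m * ‖(1 - P n) x‖ ≤ d m * (k n * ‖evol A m n ((1 - P n) x)‖)

def stableSeminorm (A P : ℕ → X →L[ℝ] X) (h : ℕ → ℝ) (n : ℕ) : Seminorm ℝ X :=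
  weightedSupSeminorm (fun m : Set.Ici n => h m / h n) fun m => evol A m n ∘L P n

def unstableSeminorm (P : ℕ → X →L[ℝ] X) (B : ℕ → ℕ → X →L[ℝ] X) (k : ℕ → ℝ) (n : ℕ) :
    Seminorm ℝ X :=
  weightedSupSeminorm (fun j : Set.Iic n => k n / k j) fun j => B n j ∘L (1 - P n)

theorem StableBound.div_mul_norm_le (hd : StableBound A P h d) (hh : ∀ n, 0 < h n)
    {m n : ℕ} (hnm : n ≤ m) (x : X) : h m / h n * ‖evol A m n (P n x)‖ ≤ d n * ‖P n x‖ := by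
  rw [div_mul_eq_mul_div, div_le_iff₀ (hh n)]
  linarith [hd m n hnm x]

theorem StableBound.bddAbove (hd : StableBound A P h d) (hh : ∀ n, 0 < h n) (n : ℕ) (x : X) :
    BddAbove (Set.range fun m : Set.Ici n => h m / h n * ‖(evol A m n ∘L P n) x‖) :=
  ⟨d n * ‖P n x‖, by rintro _ ⟨m, rfl⟩; exact hd.div_mul_norm_le hh m.2 x⟩

theorem StableBound.le_stableSeminorm (hd : StableBound A P h d) (hh : ∀ n, 0 < h n)
    {m n : ℕ} (hnm : n ≤ m) (x : X) :
    h m / h n * ‖evol A m n (P n x)‖ ≤ stableSeminorm A P h n x :=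
  le_weightedSupSeminorm (fun m : Set.Ici n => div_nonneg (hh m).le (hh n).le)
    (hd.bddAbove hh n) ⟨m, hnm⟩ x

theorem StableBound.stableSeminorm_le_of_forall_le (hd : StableBound A P h d)
    (hh : ∀ n, 0 < h n) {n : ℕ} {x : X} {r : ℝ}
    (hr : ∀ m, n ≤ m → h m / h n * ‖evol A m n (P n x)‖ ≤ r) :
    stableSeminorm A P h n x ≤ r :=
  weightedSupSeminorm_le (fun m : Set.Ici n => div_nonneg (hh m).le (hh n).le)
    (hd.bddAbove hh n) fun m => hr m m.2

theorem StableBound.stableSeminorm_le (hd : StableBound A P h d) (hh : ∀ n, 0 < h n)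
    (n : ℕ) (x : X) : stableSeminorm A P h n x ≤ d n * ‖P n x‖ :=
  hd.stableSeminorm_le_of_forall_le hh fun _ hnm => hd.div_mul_norm_le hh hnm x

theorem StableBound.norm_proj_le_stableSeminorm (hd : StableBound A P h d)
    (hh : ∀ n, 0 < h n) (n : ℕ) (x : X) : ‖P n x‖ ≤ stableSeminorm A P h n x := by
  simpa [(hh n).ne'] using hd.le_stableSeminorm hh (le_refl n) x

theorem StableBound.stableSeminorm_evol_le (hd : StableBound A P h d) (hh : ∀ n, 0 < h n)
    (hP : ProjSeq P) (hinv : InvariantFor A P) {m n : ℕ} (hnm : n ≤ m) (x : X) :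
    h m * stableSeminorm A P h m (evol A m n (P n x)) ≤ h n * stableSeminorm A P h n x := by
  have hquot : stableSeminorm A P h m (evol A m n (P n x)) ≤
      h n / h m * stableSeminorm A P h n x := by
    refine hd.stableSeminorm_le_of_forall_le hh fun l hml => ?_
    rw [← hinv.evol_proj_apply hnm, hP.proj_proj_apply, evol_evol_apply A hnm hml]
    calc h l / h m * ‖evol A l n (P n x)‖
        = h n / h m * (h l / h n * ‖evol A l n (P n x)‖) := by
          field_simp [(hh n).ne', (hh m).ne']
      _ ≤ h n / h m * stableSeminorm A P h n x :=
          mul_le_mul_of_nonneg_left (hd.le_stableSeminorm hh (hnm.trans hml) x)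
            (div_nonneg (hh n).le (hh m).le)
  calc h m * stableSeminorm A P h m (evol A m n (P n x))
      ≤ h m * (h n / h m * stableSeminorm A P h n x) :=
        mul_le_mul_of_nonneg_left hquot (hh m).le
    _ = h n * stableSeminorm A P h n x := by field_simp [(hh m).ne']

theorem StableBound.stableSeminorm_skew_eq_zero (hd : StableBound A P h d)
    (hh : ∀ n, 0 < h n) (hP : ProjSeq P) (hB : SkewEvol A P B) {m n : ℕ} (hnm : n ≤ m)
    (x : X) : stableSeminorm A P h n (B m n ((1 - P m) x)) = 0 := by
  refine le_antisymm ?_ (apply_nonneg _ _)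
  simpa only [hB.proj_apply hP hnm, norm_zero, mul_zero] using
    hd.stableSeminorm_le hh n (B m n ((1 - P m) x))

theorem UnstableBound.div_mul_norm_le (hd : UnstableBound A P k d) (hk : ∀ n, 0 < k n)
    (hB : SkewEvol A P B) {m n : ℕ} (hnm : n ≤ m) (x : X) :
    k m / k n * ‖B m n ((1 - P m) x)‖ ≤ d m * ‖(1 - P m) x‖ := by
  have hz := hd m n hnm (B m n ((1 - P m) x))
  rw [hB.compl_apply hnm, hB.evol_apply hnm] at hz
  rw [div_mul_eq_mul_div, div_le_iff₀ (hk n)]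
  linarith

theorem UnstableBound.bddAbove (hd : UnstableBound A P k d) (hk : ∀ n, 0 < k n)
    (hB : SkewEvol A P B) (n : ℕ) (x : X) :
    BddAbove (Set.range fun j : Set.Iic n => k n / k j * ‖(B n j ∘L (1 - P n)) x‖) :=
  ⟨d n * ‖(1 - P n) x‖, by rintro _ ⟨j, rfl⟩; exact hd.div_mul_norm_le hk hB j.2 x⟩

theorem UnstableBound.le_unstableSeminorm (hd : UnstableBound A P k d) (hk : ∀ n, 0 < k n)
    (hB : SkewEvol A P B) {j n : ℕ} (hjn : j ≤ n) (x : X) :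
    k n / k j * ‖B n j ((1 - P n) x)‖ ≤ unstableSeminorm P B k n x :=
  le_weightedSupSeminorm (fun j : Set.Iic n => div_nonneg (hk n).le (hk j).le)
    (hd.bddAbove hk hB n) ⟨j, hjn⟩ x

theorem UnstableBound.unstableSeminorm_le_of_forall_le (hd : UnstableBound A P k d)
    (hk : ∀ n, 0 < k n) (hB : SkewEvol A P B) {n : ℕ} {x : X} {r : ℝ}
    (hr : ∀ j, j ≤ n → k n / k j * ‖B n j ((1 - P n) x)‖ ≤ r) :
    unstableSeminorm P B k n x ≤ r :=
  weightedSupSeminorm_le (fun j : Set.Iic n => div_nonneg (hk n).le (hk j).le)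
    (hd.bddAbove hk hB n) fun j => hr j j.2

theorem UnstableBound.unstableSeminorm_le (hd : UnstableBound A P k d) (hk : ∀ n, 0 < k n)
    (hB : SkewEvol A P B) (n : ℕ) (x : X) :
    unstableSeminorm P B k n x ≤ d n * ‖(1 - P n) x‖ :=
  hd.unstableSeminorm_le_of_forall_le hk hB fun _ hjn => hd.div_mul_norm_le hk hB hjn x

theorem UnstableBound.norm_compl_le_unstableSeminorm (hd : UnstableBound A P k d)
    (hk : ∀ n, 0 < k n) (hB : SkewEvol A P B) (n : ℕ) (x : X) :
    ‖(1 - P n) x‖ ≤ unstableSeminorm P B k n x := by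
  simpa only [hB.self_apply, div_self (hk n).ne', one_mul] using
    hd.le_unstableSeminorm hk hB (le_refl n) x

theorem UnstableBound.unstableSeminorm_skew_le (hd : UnstableBound A P k d) (hk : ∀ n, 0 < k n)
    (hB : SkewEvol A P B) (hP : ProjSeq P) (hSI : StronglyInvariantFor A P) {m n : ℕ}
    (hnm : n ≤ m) (x : X) :
    k m * unstableSeminorm P B k n (B m n ((1 - P m) x)) ≤ k n * unstableSeminorm P B k m x := by
  have hquot : unstableSeminorm P B k n (B m n ((1 - P m) x)) ≤
      k n / k m * unstableSeminorm P B k m x := by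
    refine hd.unstableSeminorm_le_of_forall_le hk hB fun j hjn => ?_
    rw [hB.compl_apply hnm, hB.cocycle_apply hP hSI hjn hnm]
    calc k n / k j * ‖B m j ((1 - P m) x)‖
        = k n / k m * (k m / k j * ‖B m j ((1 - P m) x)‖) := by
          field_simp [(hk j).ne', (hk m).ne']
      _ ≤ k n / k m * unstableSeminorm P B k m x :=
          mul_le_mul_of_nonneg_left (hd.le_unstableSeminorm hk hB (hjn.trans hnm) x)
            (div_nonneg (hk n).le (hk m).le)
  calc k m * unstableSeminorm P B k n (B m n ((1 - P m) x))
      ≤ k m * (k n / k m * unstableSeminorm P B k m x) :=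
        mul_le_mul_of_nonneg_left hquot (hk m).le
    _ = k n * unstableSeminorm P B k m x := by field_simp [(hk m).ne']

theorem UnstableBound.unstableSeminorm_evol_proj_eq_zero (hd : UnstableBound A P k d)
    (hk : ∀ n, 0 < k n) (hB : SkewEvol A P B) (hP : ProjSeq P) (hinv : InvariantFor A P)
    {m n : ℕ} (hnm : n ≤ m) (x : X) : unstableSeminorm P B k m (evol A m n (P n x)) = 0 := by
  refine le_antisymm ?_ (apply_nonneg _ _)
  simpa [← hinv.evol_proj_apply hnm, hP.proj_proj_apply] using
    hd.unstableSeminorm_le hk hB m (evol A m n (P n x))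

theorem Dichotomic.exists_normsCompatible (hP : ProjSeq P) (hSI : StronglyInvariantFor A P)
    (hB : SkewEvol A P B) (hh : ∀ n, 0 < h n) (hk : ∀ n, 0 < k n) (hD : Dichotomic A P h k) :
    ∃ N : ℕ → X → ℝ, NormsCompatible N P ∧
      ∀ m n : ℕ, n ≤ m → ∀ x : X,
        h m * N m (evol A m n (P n x)) ≤ h n * N n x ∧
        k m * N n (B m n ((1 - P m) x)) ≤ k n * N m x := by
  obtain ⟨d, hd_one, hd_mono, hd⟩ := hD
  have hds : StableBound A P h d := fun m n hnm x => (hd m n hnm x).1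
  have hdu : UnstableBound A P k d := fun m n hnm x => (hd m n hnm x).2
  set S := stableSeminorm A P h
  set U := unstableSeminorm P B k
  have hnorm (n : ℕ) (x : X) : ‖x‖ ≤ (S n + U n) x := calc
    ‖x‖ = ‖P n x + (1 - P n) x‖ := by simp
    _ ≤ S n x + U n x := (norm_add_le _ _).trans <| add_le_add
      (hds.norm_proj_le_stableSeminorm hh n x) (hdu.norm_compl_le_unstableSeminorm hk hB n x)
  refine ⟨fun n => ⇑(S n + U n), ⟨isNormSeq_of_norm_le _ hnorm, d, hd_one, hd_mono,
    fun n x => ⟨hnorm n x, ?_⟩⟩, fun m n hnm x => ⟨?_, ?_⟩⟩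
  · simp only [FunLike.coe_add, Pi.add_apply, mul_add]
    exact add_le_add (hds.stableSeminorm_le hh n x) (hdu.unstableSeminorm_le hk hB n x)
  · simp only [FunLike.coe_add, Pi.add_apply]
    rw [hdu.unstableSeminorm_evol_proj_eq_zero hk hB hP hSI.1 hnm, add_zero]
    exact (hds.stableSeminorm_evol_le hh hP hSI.1 hnm x).trans <|
      mul_le_mul_of_nonneg_left (le_add_of_nonneg_right (apply_nonneg _ _)) (hh n).le
  · simp only [FunLike.coe_add, Pi.add_apply]
    rw [hds.stableSeminorm_skew_eq_zero hh hP hB hnm, zero_add]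
    exact (hdu.unstableSeminorm_skew_le hk hB hP hSI hnm x).trans <|
      mul_le_mul_of_nonneg_left (le_add_of_nonneg_left (apply_nonneg _ _)) (hk n).le

theorem Dichotomic.of_normsCompatible {N : ℕ → X → ℝ} (hP : ProjSeq P) (hinv : InvariantFor A P)
    (hB : SkewEvol A P B) (hh : ∀ n, 0 ≤ h n) (hk : ∀ n, 0 ≤ k n) (hN : NormsCompatible N P)
    (hNA : ∀ m n : ℕ, n ≤ m → ∀ x : X,
      h m * N m (evol A m n (P n x)) ≤ h n * N n x ∧
      k m * N n (B m n ((1 - P m) x)) ≤ k n * N m x) :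
    Dichotomic A P h k := by
  obtain ⟨-, c, hc_one, hc_mono, hc⟩ := hN
  refine ⟨c, hc_one, hc_mono, fun m n hnm x => ⟨?_, ?_⟩⟩
  · have hNPx : N n (P n x) ≤ c n * ‖P n x‖ := by
      simpa [hP.proj_proj_apply, hP.compl_proj_apply] using (hc n (P n x)).2
    calc h m * ‖evol A m n (P n x)‖ ≤ h m * N m (evol A m n (P n x)) :=
          mul_le_mul_of_nonneg_left (hc m _).1 (hh m)
      _ ≤ h n * N n (P n x) := by simpa [hP.proj_proj_apply] using (hNA m n hnm (P n x)).1
      _ ≤ h n * (c n * ‖P n x‖) := mul_le_mul_of_nonneg_left hNPx (hh n)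
      _ = c n * (h n * ‖P n x‖) := by ring
  · set y := evol A m n ((1 - P n) x)
    have hPy : P m y = 0 := by rw [← hinv.evol_proj_apply hnm, hP.proj_compl_apply, map_zero]
    have hQy : (1 - P m) y = y := by simp [hPy]
    have hNy : N m y ≤ c m * ‖y‖ := by simpa [hPy, hQy] using (hc m y).2
    have hBy : B m n ((1 - P m) y) = (1 - P n) x := by rw [hQy]; exact hB.apply_evol hnm x
    calc k m * ‖(1 - P n) x‖ ≤ k m * N n ((1 - P n) x) :=
          mul_le_mul_of_nonneg_left (hc n _).1 (hk m)
      _ ≤ k n * N m y := hBy ▸ (hNA m n hnm y).2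
      _ ≤ k n * (c m * ‖y‖) := mul_le_mul_of_nonneg_left hNy (hk n)
      _ = c m * (k n * ‖y‖) := by ring

end DichotomyNorm

theorem stmt_6_general (A P : ℕ → X →L[ℝ] X) (B : ℕ → ℕ → X →L[ℝ] X)
    (hP : ProjSeq P) (hSI : StronglyInvariantFor A P) (hB : SkewEvol A P B)
    (h k : ℕ → ℝ) (hh : IsGrowthRate h) (hk : IsGrowthRate k) :
    Dichotomic A P h k ↔
      ∃ N : ℕ → X → ℝ, NormsCompatible N P ∧
        ∀ m n : ℕ, n ≤ m → ∀ x : X,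
          h m * N m (evol A m n (P n x)) ≤ h n * N n x ∧
          k m * N n (B m n ((1 - P m) x)) ≤ k n * N m x :=
  ⟨Dichotomic.exists_normsCompatible hP hSI hB hh.pos hk.pos, fun ⟨_, hN, hNA⟩ =>
    Dichotomic.of_normsCompatible hP hSI.1 hB (fun n => (hh.pos n).le) (fun n => (hk.pos n).le)
      hN hNA⟩

theorem stmt_6 [CompleteSpace X] (A P : ℕ → X →L[ℝ] X) (B : ℕ → ℕ → X →L[ℝ] X)
    (hP : ProjSeq P) (hSI : StronglyInvariantFor A P) (hB : SkewEvol A P B)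
    (h k : ℕ → ℝ) (hh : IsGrowthRate h) (hk : IsGrowthRate k) :
    Dichotomic A P h k ↔
      ∃ N : ℕ → X → ℝ, NormsCompatible N P ∧
        ∀ m n : ℕ, n ≤ m → ∀ x : X,
          h m * N m (evol A m n (P n x)) ≤ h n * N n x ∧
          k m * N n (B m n ((1 - P m) x)) ≤ k n * N m x :=
  stmt_6_general A P B hP hSI hB h k hh hk

end
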